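/- arXiv:0909.4969 — 2 statements merged into one kernel-verified Lean document; each statement's English description precedes it below -/
import Mathlib

section
/- Let A and B be real m × n matrices and let k be a positive integer. Let A_k be a best rank-k approximation of A, let B_k be a best rank-k approximation of B, and let (A−B)_k be a best rank-k approximation of A−B. Then ‖A − B_k‖_F ≤ ‖A − A_k‖_F + 2 sqrt(‖(A−B)_k‖_F · ‖A_k‖_F) + ‖(A−B)_k‖_F. -/
open Matrix MeasureTheory ProbabilityTheory
open scoped BigOperators ENNReal

noncomputable section

/-- The Frobenius norm of a real matrix. -/
def frobNorm {m n : Type*} [Fintype m] [Fintype n] (A : Matrix m n ℝ) : ℝ :=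
  Real.sqrt (∑ i, ∑ j, (A i j) ^ 2)

/-- `B` is a best rank-`k` approximation of `A` in Frobenius norm. -/
def IsBestRankApprox {m n : Type*} [Fintype m] [Fintype n]
    (A B : Matrix m n ℝ) (k : ℕ) : Prop :=
  B.rank ≤ k ∧ ∀ C : Matrix m n ℝ, C.rank ≤ k → frobNorm (A - B) ≤ frobNorm (A - C)

/-- A `d`-mode real tensor of size `I 0 × ⋯ × I (d-1)`. -/
abbrev Tensor (d : ℕ) (I : Fin d → ℕ) : Type := (∀ i : Fin d, Fin (I i)) → ℝ

/-- The Frobenius-type norm of a tensor. -/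
def tnorm {d : ℕ} {I : Fin d → ℕ} (X : Tensor d I) : ℝ :=
  Real.sqrt (∑ idx, (X idx) ^ 2)

/-- The mode-`n` product of a tensor with a square `I n × I n` matrix. -/
def modeProd {d : ℕ} {I : Fin d → ℕ} (X : Tensor d I) (n : Fin d)
    (M : Matrix (Fin (I n)) (Fin (I n)) ℝ) : Tensor d I :=
  fun idx => ∑ t : Fin (I n), M (idx n) t * X (Function.update idx n t)

/-- Iterated mode products `X ×_{l₁} M l₁ ×_{l₂} ⋯` along a list of modes. -/
def multiProd {d : ℕ} {I : Fin d → ℕ} (X : Tensor d I)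
    (M : ∀ k : Fin d, Matrix (Fin (I k)) (Fin (I k)) ℝ) (l : List (Fin d)) : Tensor d I :=
  l.foldl (fun Y k => modeProd Y k (M k)) X

/-- The matricization of a tensor along mode `k` : an `I k × ∏_{j ≠ k} I j` matrix. -/
def matricize {d : ℕ} {I : Fin d → ℕ} (X : Tensor d I) (k : Fin d) :
    Matrix (Fin (I k)) (∀ j : {j : Fin d // j ≠ k}, Fin (I j.1)) ℝ :=
  fun a c => X (fun j => if h : j = k then Fin.cast (congrArg I h).symm a else c ⟨j, h⟩)

/-!
Matrices of rank at most `k` form a union of subspaces (matrices whose rows lie in a fixed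
`k`-dimensional space). Hence a best approximation `Xₖ` of `X` from that set is the orthogonal
projection of `X` onto any such subspace containing `Xₖ`, and it is at least as long as the
projection of `X` onto any other one. Let `P` be the projection onto a subspace carrying `Bₖ`.
Then `Bₖ = P B`, so `A - Bₖ = (A - P A) + P (A - B)` with `‖P (A - B)‖ ≤ ‖(A - B)ₖ‖`. Comparing
projections twice gives `‖P A‖ ≥ ‖Aₖ‖ - 2 ‖(A - B)ₖ‖`, and Pythagoras turns this into
`‖A - P A‖² ≤ ‖A - Aₖ‖² + 4 ‖Aₖ‖ ‖(A - B)ₖ‖`.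
-/

open Module

section BestApprox

variable {H : Type*} [NormedAddCommGroup H] [InnerProductSpace ℝ H]

def IsBestApprox (C : Set H) (x y : H) : Prop :=
  y ∈ C ∧ ∀ c ∈ C, ‖x - y‖ ≤ ‖x - c‖

def IsUnionOfSubspaces (C : Set H) : Prop :=
  ∀ c ∈ C, ∃ S : Submodule ℝ H, S.HasOrthogonalProjection ∧ c ∈ S ∧ (S : Set H) ⊆ C

variable {C : Set H} {x y : H} {S : Submodule ℝ H} [S.HasOrthogonalProjection]

namespace IsBestApprox

theorem starProjection_eq (h : IsBestApprox C x y) (hSC : (S : Set H) ⊆ C) (hy : y ∈ S) :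
    S.starProjection x = y := by
  have hPx : S.starProjection x ∈ S := S.starProjection_apply_mem x
  have hpyth : ‖x - y‖ ^ 2 = ‖x - S.starProjection x‖ ^ 2 + ‖S.starProjection x - y‖ ^ 2 := by
    rw [← sub_add_sub_cancel x (S.starProjection x) y, sq, sq, sq,
      norm_add_sq_eq_norm_sq_add_norm_sq_real
        (S.starProjection_inner_eq_zero x _ (S.sub_mem hPx hy))]
  have hmin := h.2 _ (hSC hPx)
  have hzero : ‖S.starProjection x - y‖ ^ 2 ≤ 0 := by
    nlinarith [norm_nonneg (x - y), norm_nonneg (x - S.starProjection x)]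
  rw [← sub_eq_zero, ← norm_eq_zero]
  nlinarith [norm_nonneg (S.starProjection x - y)]

theorem norm_sq_add_norm_sub_sq (h : IsBestApprox C x y) (hSC : (S : Set H) ⊆ C) (hy : y ∈ S) :
    ‖y‖ ^ 2 + ‖x - y‖ ^ 2 = ‖x‖ ^ 2 := by
  rw [Submodule.norm_sq_eq_add_norm_sq_starProjection x S, Submodule.starProjection_orthogonal_val,
    h.starProjection_eq hSC hy]

theorem norm_starProjection_le (h : IsBestApprox C x y) (hC : IsUnionOfSubspaces C)
    (hSC : (S : Set H) ⊆ C) : ‖S.starProjection x‖ ≤ ‖y‖ := by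
  obtain ⟨T, _, hyT, hTC⟩ := hC y h.1
  have hy := h.norm_sq_add_norm_sub_sq hTC hyT
  have hPx := Submodule.norm_sq_eq_add_norm_sq_starProjection x S
  rw [Submodule.starProjection_orthogonal_val] at hPx
  have hmin := h.2 _ (hSC (S.starProjection_apply_mem x))
  have hmin2 : ‖x - y‖ ^ 2 ≤ ‖x - S.starProjection x‖ ^ 2 := by gcongr
  exact (pow_le_pow_iff_left₀ (norm_nonneg _) (norm_nonneg _) two_ne_zero).1 (by linarith)

end IsBestApprox

theorem norm_sub_le_of_isBestApprox (hC : IsUnionOfSubspaces C) {a b a' b' d' : H}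
    (ha : IsBestApprox C a a') (hb : IsBestApprox C b b') (hd : IsBestApprox C (a - b) d') :
    ‖a - b'‖ ≤ ‖a - a'‖ + 2 * √(‖d'‖ * ‖a'‖) + ‖d'‖ := by
  obtain ⟨S, _, hb'S, hSC⟩ := hC b' hb.1
  obtain ⟨T, _, ha'T, hTC⟩ := hC a' ha.1
  set P := S.starProjection
  have hPb : P b = b' := hb.starProjection_eq hSC hb'S
  have hPd : ‖P a - b'‖ ≤ ‖d'‖ := by
    rw [← hPb, ← map_sub]; exact hd.norm_starProjection_le hC hSC
  have hTd : ‖a' - T.starProjection b‖ ≤ ‖d'‖ := by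
    rw [← ha.starProjection_eq hTC ha'T, ← map_sub]; exact hd.norm_starProjection_le hC hTC
  have hb' : ‖a'‖ - ‖d'‖ ≤ ‖b'‖ := by
    have := hb.norm_starProjection_le hC hTC
    have := norm_sub_norm_le a' (T.starProjection b)
    linarith
  have hPa : ‖a'‖ - 2 * ‖d'‖ ≤ ‖P a‖ := by
    have := norm_sub_norm_le b' (P a)
    rw [norm_sub_rev] at this
    linarith
  have hpyth : ‖a - P a‖ ^ 2 + ‖P a‖ ^ 2 = ‖a'‖ ^ 2 + ‖a - a'‖ ^ 2 := by
    rw [← Submodule.starProjection_orthogonal_val, add_comm,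
      ← Submodule.norm_sq_eq_add_norm_sq_starProjection a S, ← ha.norm_sq_add_norm_sub_sq hTC ha'T]
  have hPa_sq : ‖a'‖ ^ 2 - 4 * (‖d'‖ * ‖a'‖) ≤ ‖P a‖ ^ 2 := by
    rcases le_total ‖a'‖ (2 * ‖d'‖) with hsmall | hlarge
    · nlinarith [norm_nonneg a', norm_nonneg (P a)]
    · nlinarith [norm_nonneg d']
  have hPa' : ‖a - P a‖ ≤ ‖a - a'‖ + 2 * √(‖d'‖ * ‖a'‖) := by
    have hs := Real.sq_sqrt (mul_nonneg (norm_nonneg d') (norm_nonneg a'))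
    refine (pow_le_pow_iff_left₀ (norm_nonneg _) (by positivity) two_ne_zero).1 ?_
    nlinarith [mul_nonneg (norm_nonneg (a - a')) (Real.sqrt_nonneg (‖d'‖ * ‖a'‖))]
  calc ‖a - b'‖ = ‖(a - P a) + (P a - b')‖ := by rw [sub_add_sub_cancel]
    _ ≤ ‖a - P a‖ + ‖P a - b'‖ := norm_add_le _ _
    _ ≤ _ := by linarith

end BestApprox

namespace Matrix

variable {m n : Type*}

def toEuclideanSpace : Matrix m n ℝ ≃ₗ[ℝ] EuclideanSpace ℝ (m × n) :=
  (LinearEquiv.curry ℝ ℝ m n).symm.trans (WithLp.linearEquiv 2 ℝ (m × n → ℝ)).symm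

@[simp]
theorem toEuclideanSpace_apply (M : Matrix m n ℝ) (i : m) (j : n) :
    toEuclideanSpace M (i, j) = M i j :=
  rfl

variable [Fintype m] [Fintype n]

theorem frobNorm_eq_norm_toEuclideanSpace (M : Matrix m n ℝ) :
    frobNorm M = ‖toEuclideanSpace M‖ := by
  rw [EuclideanSpace.norm_eq, frobNorm, ← Finset.univ_product_univ, Finset.sum_product]
  simp

def rankLE (k : ℕ) : Set (EuclideanSpace ℝ (m × n)) :=
  {x | (toEuclideanSpace.symm x).rank ≤ k}

theorem isUnionOfSubspaces_rankLE (k : ℕ) : IsUnionOfSubspaces (rankLE (m := m) (n := n) k) := by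
  intro c hc
  set M := toEuclideanSpace.symm c
  refine ⟨(Submodule.pi Set.univ fun _ : m => Submodule.span ℝ (Set.range M)).comap
    toEuclideanSpace.symm.toLinearMap, inferInstance, fun i _ => Submodule.subset_span ⟨i, rfl⟩, ?_⟩
  intro x hx
  calc (toEuclideanSpace.symm x).rank
      ≤ finrank ℝ (Submodule.span ℝ (Set.range M)) := by
        rw [rank_eq_finrank_span_row]
        exact Submodule.finrank_mono
          (Submodule.span_le.2 (Set.range_subset_iff.2 fun i => hx i trivial))
    _ = M.rank := (rank_eq_finrank_span_row M).symm
    _ ≤ k := hc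

theorem IsBestRankApprox.isBestApprox {A Ak : Matrix m n ℝ} {k : ℕ}
    (h : IsBestRankApprox A Ak k) :
    IsBestApprox (rankLE k) (toEuclideanSpace A) (toEuclideanSpace Ak) := by
  refine ⟨show (toEuclideanSpace.symm (toEuclideanSpace Ak)).rank ≤ k by
    rw [LinearEquiv.symm_apply_apply]; exact h.1, fun c hc => ?_⟩
  have := h.2 _ hc
  simpa only [frobNorm_eq_norm_toEuclideanSpace, map_sub, LinearEquiv.apply_symm_apply] using this

end Matrix

theorem statement1_general {m n : ℕ} (A B : Matrix (Fin m) (Fin n) ℝ) (k : ℕ)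
    (Ak Bk Dk : Matrix (Fin m) (Fin n) ℝ)
    (hAk : IsBestRankApprox A Ak k) (hBk : IsBestRankApprox B Bk k)
    (hDk : IsBestRankApprox (A - B) Dk k) :
    frobNorm (A - Bk) ≤
      frobNorm (A - Ak) + 2 * Real.sqrt (frobNorm Dk * frobNorm Ak) + frobNorm Dk := by
  have := norm_sub_le_of_isBestApprox (isUnionOfSubspaces_rankLE k)
    hAk.isBestApprox hBk.isBestApprox hDk.isBestApprox
  simpa only [frobNorm_eq_norm_toEuclideanSpace, map_sub] using this

/-- For real `m × n` matrices `A`, `B` and a positive integer `k`, if `Ak`, `Bk`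
and `Dk` are best rank-`k` Frobenius approximations of `A`, `B` and `A - B` respectively, then
`‖A − Bk‖_F ≤ ‖A − Ak‖_F + 2 √(‖Dk‖_F ‖Ak‖_F) + ‖Dk‖_F`. -/
theorem statement1 {m n : ℕ} (A B : Matrix (Fin m) (Fin n) ℝ) (k : ℕ) (hk : 0 < k)
    (Ak Bk Dk : Matrix (Fin m) (Fin n) ℝ)
    (hAk : IsBestRankApprox A Ak k) (hBk : IsBestRankApprox B Bk k)
    (hDk : IsBestRankApprox (A - B) Dk k) :
    frobNorm (A - Bk) ≤
      frobNorm (A - Ak) + 2 * Real.sqrt (frobNorm Dk * frobNorm Ak) + frobNorm Dk :=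
  statement1_general A B k Ak Bk Dk hAk hBk hDk
end
end

section
/- Let Y ∈ ℝ^{I₁×⋯×I_d} be a d-mode tensor and for each k = 1,…,d let A^{(k)} be a real I_k × r_k matrix with orthonormal columns, so that P_k = A^{(k)}A^{(k)ᵀ} is an orthogonal projection on ℝ^{I_k}. Then ‖Y − Y ×₁ P₁ ×₂ P₂ ⋯ ×_d P_d‖ ≤ Σ_{k=1}^{d} ‖Y − Y ×_k P_k‖. -/
/-! Write `Y ×_k P` for the mode product. Splitting off the first mode,
`Y - Y ×₁ P₁ ⋯ ×_d P_d = (Y - Y ×₁ P₁) + (Y' - Y' ×₂ P₂ ⋯ ×_d P_d)` with `Y' = Y ×₁ P₁`, and since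
mode products along distinct modes commute, `Y' - Y' ×_j P_j = (Y - Y ×_j P_j) ×₁ P₁`. An
orthogonal projection does not increase the Euclidean norm of any mode-`1` fibre, hence of the
tensor, so induction on the number of modes gives the bound. -/

open Matrix MeasureTheory ProbabilityTheory
open scoped BigOperators ENNReal

noncomputable section

theorem Matrix.isStarProjection_mul_conjTranspose {m r α : Type*} [Fintype m] [Fintype r]
    [DecidableEq r] [Semiring α] [StarRing α] {A : Matrix m r α}
    (hA : Aᴴ * A = 1) : IsStarProjection (A * Aᴴ) where
  isIdempotentElem := by
    rw [IsIdempotentElem, Matrix.mul_assoc, ← Matrix.mul_assoc Aᴴ, hA, Matrix.one_mul]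
  isSelfAdjoint := by
    rw [IsSelfAdjoint, Matrix.star_eq_conjTranspose, conjTranspose_mul, conjTranspose_conjTranspose]

open scoped Matrix.Norms.L2Operator in
theorem Matrix.sum_sq_mulVec_le_of_isStarProjection {n : Type*} [Fintype n] [DecidableEq n]
    {P : Matrix n n ℝ} (hP : IsStarProjection P) (v : n → ℝ) :
    ∑ i, (P *ᵥ v) i ^ 2 ≤ ∑ i, v i ^ 2 := by
  have h : ‖(EuclideanSpace.equiv n ℝ).symm (P *ᵥ v)‖ ≤ ‖(EuclideanSpace.equiv n ℝ).symm v‖ :=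
    (P.l2_opNorm_mulVec _).trans (mul_le_of_le_one_left (norm_nonneg _) hP.norm_le)
  simp only [EuclideanSpace.norm_eq, Real.norm_eq_abs, sq_abs] at h
  exact (Real.sqrt_le_sqrt_iff (by positivity)).mp h

section Tensor

variable {d : ℕ} {I : Fin d → ℕ}

theorem tnorm_eq_norm_toLp (X : Tensor d I) : tnorm X = ‖WithLp.toLp 2 X‖ := by
  simp [tnorm, EuclideanSpace.norm_eq, Real.norm_eq_abs, sq_abs]

theorem tnorm_add_le (X Z : Tensor d I) : tnorm (X + Z) ≤ tnorm X + tnorm Z := by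
  simpa only [tnorm_eq_norm_toLp, WithLp.toLp_add] using norm_add_le _ _

theorem modeProd_sub (X Z : Tensor d I) (n : Fin d) (M : Matrix (Fin (I n)) (Fin (I n)) ℝ) :
    modeProd (X - Z) n M = modeProd X n M - modeProd Z n M := by
  funext idx
  simp [modeProd, mul_sub, Finset.sum_sub_distrib]

theorem modeProd_comm (X : Tensor d I) {m n : Fin d} (h : m ≠ n)
    (M : Matrix (Fin (I m)) (Fin (I m)) ℝ) (N : Matrix (Fin (I n)) (Fin (I n)) ℝ) :
    modeProd (modeProd X m M) n N = modeProd (modeProd X n N) m M := by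
  funext idx
  simp only [modeProd, Finset.mul_sum]
  rw [Finset.sum_comm]
  refine Finset.sum_congr rfl fun s _ => Finset.sum_congr rfl fun t _ => ?_
  rw [Function.update_of_ne h, Function.update_of_ne h.symm, Function.update_comm h.symm]
  ring

theorem modeProd_piSplitAt_symm (X : Tensor d I) (n : Fin d)
    (M : Matrix (Fin (I n)) (Fin (I n)) ℝ) (a : Fin (I n)) (c : ∀ j : {j // j ≠ n}, Fin (I j)) :
    modeProd X n M ((Equiv.piSplitAt n _).symm (a, c)) =
      (M *ᵥ fun b => X ((Equiv.piSplitAt n _).symm (b, c))) a := by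
  have hupdate : ∀ t, Function.update ((Equiv.piSplitAt n _).symm (a, c)) n t =
      (Equiv.piSplitAt n (fun i => Fin (I i))).symm (t, c) := by
    intro t
    funext j
    by_cases h : j = n
    · subst h; simp [Equiv.piSplitAt]
    · simp [Equiv.piSplitAt, h]
  simp only [modeProd, hupdate]
  simp [Matrix.mulVec, dotProduct, Equiv.piSplitAt]

theorem tnorm_modeProd_le (X : Tensor d I) (n : Fin d) {M : Matrix (Fin (I n)) (Fin (I n)) ℝ}
    (hM : ∀ v, ∑ a, (M *ᵥ v) a ^ 2 ≤ ∑ a, v a ^ 2) : tnorm (modeProd X n M) ≤ tnorm X := by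
  let e := Equiv.piSplitAt n (fun i => Fin (I i))
  have hsum : ∀ f : (∀ i, Fin (I i)) → ℝ, ∑ idx, f idx = ∑ c, ∑ a, f (e.symm (a, c)) := by
    intro f
    rw [← Equiv.sum_comp e.symm f, Fintype.sum_prod_type, Finset.sum_comm]
  refine Real.sqrt_le_sqrt ?_
  rw [hsum, hsum fun idx => X idx ^ 2]
  refine Finset.sum_le_sum fun c _ => ?_
  simp only [e, modeProd_piSplitAt_symm]
  exact hM _

theorem tnorm_sub_multiProd_le_sum {M : ∀ k : Fin d, Matrix (Fin (I k)) (Fin (I k)) ℝ}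
    (hM : ∀ k X, tnorm (modeProd X k (M k)) ≤ tnorm X) {l : List (Fin d)} (hl : l.Nodup)
    (Y : Tensor d I) :
    tnorm (Y - multiProd Y M l) ≤ (l.map fun k => tnorm (Y - modeProd Y k (M k))).sum := by
  induction l generalizing Y with
  | nil => simp [multiProd, tnorm]
  | cons k l ih =>
    obtain ⟨hkl, hl⟩ := List.nodup_cons.mp hl
    set Y' := modeProd Y k (M k)
    have hsplit : Y - multiProd Y M (k :: l) = (Y - Y') + (Y' - multiProd Y' M l) := by
      simp only [multiProd, List.foldl_cons, Y']
      abel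
    have hfactor : ∀ j ∈ l, Y' - modeProd Y' j (M j) = modeProd (Y - modeProd Y j (M j)) k (M k) :=
      fun j hj => by rw [modeProd_sub, modeProd_comm Y (ne_of_mem_of_not_mem hj hkl).symm]
    calc tnorm (Y - multiProd Y M (k :: l))
        ≤ tnorm (Y - Y') + tnorm (Y' - multiProd Y' M l) := hsplit ▸ tnorm_add_le _ _
      _ ≤ tnorm (Y - Y') + (l.map fun j => tnorm (Y - modeProd Y j (M j))).sum := by
        gcongr
        refine (ih hl Y').trans (List.sum_le_sum fun j hj => ?_)
        rw [hfactor j hj]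
        exact hM k _
      _ = _ := by rw [List.map_cons, List.sum_cons]

end Tensor

/-- for orthogonal projections `P k = A k * (A k)ᵀ` along each mode,
`‖Y − Y ×₁ P₁ ⋯ ×_d P_d‖ ≤ Σ_k ‖Y − Y ×_k P_k‖`. -/
theorem statement4 {d : ℕ} {I : Fin d → ℕ} (Y : Tensor d I) (r : Fin d → ℕ)
    (A : ∀ k : Fin d, Matrix (Fin (I k)) (Fin (r k)) ℝ)
    (hA : ∀ k, (A k)ᵀ * A k = 1) :
    tnorm (Y - multiProd Y (fun k => A k * (A k)ᵀ) (List.finRange d)) ≤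
      ∑ k : Fin d, tnorm (Y - modeProd Y k (A k * (A k)ᵀ)) := by
  have hP : ∀ k, IsStarProjection (A k * (A k)ᵀ) := fun k => by
    have hAk := hA k
    rw [← conjTranspose_eq_transpose_of_trivial] at hAk ⊢
    exact isStarProjection_mul_conjTranspose hAk
  rw [Fin.sum_univ_def]
  exact tnorm_sub_multiProd_le_sum
    (fun k X => tnorm_modeProd_le X k (sum_sq_mulVec_le_of_isStarProjection (hP k)))
    (List.nodup_finRange d) Y

end
end
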